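/- Let A ∈ ℝ^{m×m'}, B ∈ ℝ^{m×p}, C ∈ ℝ^{m×n}, d ∈ ℝ^m, D ∈ ℝ^{n×m'}, E ∈ ℝ^{n×p}, F ∈ ℝ^{n×n}, c ∈ ℝⁿ, and fix x ∈ ℝ^{m'}, u ∈ ℝ^p, x' ∈ ℝ^m, ε > 0, and γ > 0 with F + Fᵀ − γI positive definite. Define g(λ, φ) = (1/2)‖Ax + Bu + Cλ + d − x'‖² + (1/ε)(λᵀφ + (1/(2γ))‖Dx + Eu + Fλ + c − φ‖²). Then there exists a unique pair (λ*, φ*) with λ* ≥ 0 and φ* ≥ 0 such that g(λ*, φ*) ≤ g(λ, φ) for all λ ≥ 0, φ ≥ 0. -/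
import Mathlib


open Matrix

lemma aux_dot_self_nonneg {n : ℕ} (v : Fin n → ℝ) : 0 ≤ v ⬝ᵥ v :=
  Finset.sum_nonneg fun _ _ => mul_self_nonneg _

lemma aux_dot_self_pos {n : ℕ} {v : Fin n → ℝ} (hv : v ≠ 0) : 0 < v ⬝ᵥ v :=
  lt_of_le_of_ne (aux_dot_self_nonneg v) fun h => hv (dotProduct_self_eq_zero.mp h.symm)

lemma aux_dc {n : ℕ} {a b : ℝ} (hab : a + b = 1) (u v u' v' : Fin n → ℝ) :
    (a • u + b • v) ⬝ᵥ (a • u' + b • v')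
      = a * (u ⬝ᵥ u') + b * (v ⬝ᵥ v') - a * b * ((u - v) ⬝ᵥ (u' - v')) := by
  have hb : b = 1 - a := by linarith
  subst hb
  simp only [add_dotProduct, dotProduct_add, smul_dotProduct, dotProduct_smul,
    sub_dotProduct, dotProduct_sub, smul_eq_mul]
  ring

noncomputable def Qaux {m n : ℕ} (C : Matrix (Fin m) (Fin n) ℝ) (F : Matrix (Fin n) (Fin n) ℝ)
    (ε γ : ℝ) (dl dp : Fin n → ℝ) : ℝ :=
  (1/2) * (C.mulVec dl ⬝ᵥ C.mulVec dl)
    + (1/ε) * (dl ⬝ᵥ dp + (1/(2*γ)) * ((F.mulVec dl - dp) ⬝ᵥ (F.mulVec dl - dp)))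

lemma Qaux_id {n m : ℕ} (C : Matrix (Fin m) (Fin n) ℝ) (F : Matrix (Fin n) (Fin n) ℝ)
    {γ : ℝ} (hγ : γ ≠ 0) (dl dp : Fin n → ℝ) :
    dl ⬝ᵥ dp + (1/(2*γ)) * ((F.mulVec dl - dp) ⬝ᵥ (F.mulVec dl - dp))
      = (1/2) * (dl ⬝ᵥ (F + Fᵀ - γ • (1 : Matrix (Fin n) (Fin n) ℝ)).mulVec dl)
        + (1/(2*γ)) * ((F.mulVec dl - γ • dl - dp) ⬝ᵥ (F.mulVec dl - γ • dl - dp)) := by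
  have ht : dl ⬝ᵥ Fᵀ.mulVec dl = dl ⬝ᵥ F.mulVec dl := by
    rw [Matrix.mulVec_transpose, dotProduct_comm dl (dl ᵥ* F)]
    exact (Matrix.dotProduct_mulVec dl F dl).symm
  have hexp : (F + Fᵀ - γ • (1 : Matrix (Fin n) (Fin n) ℝ)).mulVec dl
      = F.mulVec dl + Fᵀ.mulVec dl - γ • dl := by
    rw [Matrix.sub_mulVec, Matrix.add_mulVec, Matrix.smul_mulVec, Matrix.one_mulVec]
  rw [hexp]
  have c1 : dp ⬝ᵥ dl = dl ⬝ᵥ dp := dotProduct_comm _ _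
  have c2 : (F.mulVec dl) ⬝ᵥ dl = dl ⬝ᵥ F.mulVec dl := dotProduct_comm _ _
  have c3 : dp ⬝ᵥ F.mulVec dl = (F.mulVec dl) ⬝ᵥ dp := dotProduct_comm _ _
  simp only [dotProduct_add, dotProduct_sub, sub_dotProduct, add_dotProduct,
    dotProduct_smul, smul_dotProduct, smul_eq_mul, ht, c1, c2, c3]
  field_simp
  ring

lemma aux_cont_mulVec {k l : ℕ} (M : Matrix (Fin k) (Fin l) ℝ) :
    Continuous fun v : Fin l → ℝ => M.mulVec v := by
  refine continuous_pi fun i => ?_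
  simp only [Matrix.mulVec, dotProduct]
  exact continuous_finset_sum _ fun j _ => continuous_const.mul (continuous_apply j)

lemma aux_cont_dot {k : ℕ} {X : Type*} [TopologicalSpace X] {f g : X → Fin k → ℝ}
    (hf : Continuous f) (hg : Continuous g) : Continuous fun x => f x ⬝ᵥ g x := by
  simp only [dotProduct]
  exact continuous_finset_sum _ fun j _ =>
    ((continuous_apply j).comp hf).mul ((continuous_apply j).comp hg)

/-- The inner problem of the violation-based loss has a unique minimizer over the
nonnegative orthant. -/
theorem violation_loss_inner_existsUnique_min {m m' p n : ℕ}
    (A : Matrix (Fin m) (Fin m') ℝ) (B : Matrix (Fin m) (Fin p) ℝ)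
    (C : Matrix (Fin m) (Fin n) ℝ) (d : Fin m → ℝ)
    (D : Matrix (Fin n) (Fin m') ℝ) (E : Matrix (Fin n) (Fin p) ℝ)
    (F : Matrix (Fin n) (Fin n) ℝ) (c : Fin n → ℝ)
    (x : Fin m' → ℝ) (u : Fin p → ℝ) (x' : Fin m → ℝ)
    (ε γ : ℝ) (hε : 0 < ε) (hγ : 0 < γ)
    (hγF : ∀ v : Fin n → ℝ, v ≠ 0 →
      0 < v ⬝ᵥ (F + Fᵀ - γ • (1 : Matrix (Fin n) (Fin n) ℝ)).mulVec v)
    (g : (Fin n → ℝ) → (Fin n → ℝ) → ℝ)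
    (hg : ∀ lam phi, g lam phi =
      (1 / 2) * ((A.mulVec x + B.mulVec u + C.mulVec lam + d - x') ⬝ᵥ
          (A.mulVec x + B.mulVec u + C.mulVec lam + d - x')) +
        (1 / ε) * (lam ⬝ᵥ phi +
          (1 / (2 * γ)) * ((D.mulVec x + E.mulVec u + F.mulVec lam + c - phi) ⬝ᵥ
            (D.mulVec x + E.mulVec u + F.mulVec lam + c - phi)))) :
    ∃! z : (Fin n → ℝ) × (Fin n → ℝ),
      (∀ i, 0 ≤ z.1 i) ∧ (∀ i, 0 ≤ z.2 i) ∧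
        ∀ lam phi : Fin n → ℝ, (∀ i, 0 ≤ lam i) → (∀ i, 0 ≤ phi i) →
          g z.1 z.2 ≤ g lam phi := by
  classical
  obtain ⟨r, hr⟩ : ∃ r, A.mulVec x + B.mulVec u + d - x' = r := ⟨_, rfl⟩
  obtain ⟨s, hs⟩ : ∃ s, D.mulVec x + E.mulVec u + c = s := ⟨_, rfl⟩
  have hg' : ∀ lam phi, g lam phi =
      (1/2) * ((C.mulVec lam + r) ⬝ᵥ (C.mulVec lam + r)) +
      (1/ε) * (lam ⬝ᵥ phi + (1/(2*γ)) *
        ((F.mulVec lam - phi + s) ⬝ᵥ (F.mulVec lam - phi + s))) := by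
    intro lam phi
    rw [hg]
    have v1 : A.mulVec x + B.mulVec u + C.mulVec lam + d - x' = C.mulVec lam + r := by
      rw [← hr]; abel
    have v2 : D.mulVec x + E.mulVec u + F.mulVec lam + c - phi = F.mulVec lam - phi + s := by
      rw [← hs]; abel
    rw [v1, v2]
  -- the convex combination identity
  have combo : ∀ (a b : ℝ), a + b = 1 → ∀ l1 p1 l2 p2 : Fin n → ℝ,
      g (a • l1 + b • l2) (a • p1 + b • p2)
        = a * g l1 p1 + b * g l2 p2 - a * b * Qaux C F ε γ (l1 - l2) (p1 - p2) := by
    intro a b hab l1 p1 l2 p2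
    simp only [hg']
    have e1 : C.mulVec (a • l1 + b • l2) + r
        = a • (C.mulVec l1 + r) + b • (C.mulVec l2 + r) := by
      funext i
      simp only [Matrix.mulVec_add, Matrix.mulVec_smul, Pi.add_apply, Pi.smul_apply,
        smul_eq_mul]
      linear_combination (-(r i)) * hab
    have e2 : F.mulVec (a • l1 + b • l2) - (a • p1 + b • p2) + s
        = a • (F.mulVec l1 - p1 + s) + b • (F.mulVec l2 - p2 + s) := by
      funext i
      simp only [Matrix.mulVec_add, Matrix.mulVec_smul, Pi.add_apply, Pi.sub_apply,
        Pi.smul_apply, smul_eq_mul]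
      linear_combination (-(s i)) * hab
    rw [e1, e2, aux_dc hab, aux_dc hab, aux_dc hab]
    have d1 : (C.mulVec l1 + r) - (C.mulVec l2 + r) = C.mulVec (l1 - l2) := by
      rw [Matrix.mulVec_sub]; abel
    have d2 : (F.mulVec l1 - p1 + s) - (F.mulVec l2 - p2 + s)
        = F.mulVec (l1 - l2) - (p1 - p2) := by
      rw [Matrix.mulVec_sub]; abel
    rw [d1, d2]
    simp only [Qaux]
    ring
  have hεi : 0 < 1/ε := by positivity
  have h2γ : 0 < 1/(2*γ) := by positivity
  -- positivity of the quadratic form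
  have qpos : ∀ dl dp : Fin n → ℝ, ¬(dl = 0 ∧ dp = 0) → 0 < Qaux C F ε γ dl dp := by
    intro dl dp hne
    simp only [Qaux]
    rw [Qaux_id C F hγ.ne' dl dp]
    by_cases hdl : dl = 0
    · have hdp : dp ≠ 0 := fun h => hne ⟨hdl, h⟩
      subst hdl
      simp only [Matrix.mulVec_zero, zero_dotProduct, dotProduct_zero, smul_zero,
        zero_sub, sub_zero, neg_dotProduct, dotProduct_neg, neg_neg, mul_zero,
        zero_add, add_zero]
      have hpos := aux_dot_self_pos hdp
      nlinarith [mul_pos h2γ hpos, mul_pos hεi (mul_pos h2γ hpos)]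
    · have h1 := hγF dl hdl
      have h2 := aux_dot_self_nonneg (F.mulVec dl - γ • dl - dp)
      have h3 := aux_dot_self_nonneg (C.mulVec dl)
      have hin : 0 < (1/2) * (dl ⬝ᵥ (F + Fᵀ - γ • (1 : Matrix (Fin n) (Fin n) ℝ)).mulVec dl)
          + (1/(2*γ)) * ((F.mulVec dl - γ • dl - dp) ⬝ᵥ (F.mulVec dl - γ • dl - dp)) := by
        nlinarith [mul_nonneg h2γ.le h2]
      nlinarith [mul_pos hεi hin]
  -- the feasible set
  set S : Set ((Fin n → ℝ) × (Fin n → ℝ)) :=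
    {z | (∀ i, 0 ≤ z.1 i) ∧ (∀ i, 0 ≤ z.2 i)} with hSdef
  have hmemS : ∀ z : (Fin n → ℝ) × (Fin n → ℝ),
      z ∈ S ↔ (∀ i, 0 ≤ z.1 i) ∧ (∀ i, 0 ≤ z.2 i) := fun z => Iff.rfl
  have h0S : (0 : (Fin n → ℝ) × (Fin n → ℝ)) ∈ S := ⟨fun _ => le_rfl, fun _ => le_rfl⟩
  have hSconv : Convex ℝ S := by
    intro z1 h1 z2 h2 a b ha hb hab
    refine ⟨fun i => ?_, fun i => ?_⟩
    · exact add_nonneg (mul_nonneg ha (h1.1 i)) (mul_nonneg hb (h2.1 i))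
    · exact add_nonneg (mul_nonneg ha (h1.2 i)) (mul_nonneg hb (h2.2 i))
  have hSclosed : IsClosed S := by
    have : S = (⋂ i, {z : (Fin n → ℝ) × (Fin n → ℝ) | 0 ≤ z.1 i})
        ∩ ⋂ i, {z : (Fin n → ℝ) × (Fin n → ℝ) | 0 ≤ z.2 i} := by
      ext z; simp [hSdef, Set.mem_iInter]
    rw [this]
    exact (isClosed_iInter fun i =>
        isClosed_le continuous_const (by fun_prop)).inter
      (isClosed_iInter fun i =>
        isClosed_le continuous_const (by fun_prop))
  -- continuity
  have hGc : Continuous (fun z : (Fin n → ℝ) × (Fin n → ℝ) => g z.1 z.2) := by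
    have hfun : (fun z : (Fin n → ℝ) × (Fin n → ℝ) => g z.1 z.2)
        = fun z => (1/2) * ((C.mulVec z.1 + r) ⬝ᵥ (C.mulVec z.1 + r)) +
          (1/ε) * (z.1 ⬝ᵥ z.2 + (1/(2*γ)) *
            ((F.mulVec z.1 - z.2 + s) ⬝ᵥ (F.mulVec z.1 - z.2 + s))) :=
      funext fun z => hg' z.1 z.2
    rw [hfun]
    have h1 : Continuous fun z : (Fin n → ℝ) × (Fin n → ℝ) => C.mulVec z.1 + r :=
      ((aux_cont_mulVec C).comp continuous_fst).add continuous_const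
    have h2 : Continuous fun z : (Fin n → ℝ) × (Fin n → ℝ) => F.mulVec z.1 - z.2 + s :=
      (((aux_cont_mulVec F).comp continuous_fst).sub continuous_snd).add continuous_const
    exact (continuous_const.mul (aux_cont_dot h1 h1)).add (continuous_const.mul
      ((aux_cont_dot continuous_fst continuous_snd).add
        (continuous_const.mul (aux_cont_dot h2 h2))))
  have hQc : Continuous (fun z : (Fin n → ℝ) × (Fin n → ℝ) => Qaux C F ε γ z.1 z.2) := by
    simp only [Qaux]
    have h1 : Continuous fun z : (Fin n → ℝ) × (Fin n → ℝ) => C.mulVec z.1 :=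
      (aux_cont_mulVec C).comp continuous_fst
    have h2 : Continuous fun z : (Fin n → ℝ) × (Fin n → ℝ) => F.mulVec z.1 - z.2 :=
      ((aux_cont_mulVec F).comp continuous_fst).sub continuous_snd
    exact (continuous_const.mul (aux_cont_dot h1 h1)).add (continuous_const.mul
      ((aux_cont_dot continuous_fst continuous_snd).add
        (continuous_const.mul (aux_cont_dot h2 h2))))
  -- strict convexity
  have hstrict : StrictConvexOn ℝ S (fun z : (Fin n → ℝ) × (Fin n → ℝ) => g z.1 z.2) := by
    refine ⟨hSconv, fun z1 hz1 z2 hz2 hne a b ha hb hab => ?_⟩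
    have hq : 0 < Qaux C F ε γ (z1.1 - z2.1) (z1.2 - z2.2) := by
      refine qpos _ _ fun h => hne ?_
      have h1 : z1.1 = z2.1 := sub_eq_zero.mp h.1
      have h2 : z1.2 = z2.2 := sub_eq_zero.mp h.2
      exact Prod.ext h1 h2
    have hc := combo a b hab z1.1 z1.2 z2.1 z2.2
    show g (a • z1.1 + b • z2.1) (a • z1.2 + b • z2.2)
      < a * g z1.1 z1.2 + b * g z2.1 z2.2
    rw [hc]
    nlinarith [mul_pos (mul_pos ha hb) hq]
  -- first compact minimization over unit ball
  have hcomp : ∀ R : ℝ, IsCompact (S ∩ Metric.closedBall 0 R) := fun R =>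
    (isCompact_closedBall (0 : (Fin n → ℝ) × (Fin n → ℝ)) R).inter_left hSclosed
  have hmem0 : ∀ R : ℝ, 0 ≤ R → (0 : (Fin n → ℝ) × (Fin n → ℝ)) ∈ S ∩ Metric.closedBall 0 R :=
    fun R hR => ⟨h0S, by simpa [Metric.mem_closedBall] using hR⟩
  obtain ⟨z1, hz1K, hz1min⟩ := (hcomp 1).exists_isMinOn ⟨0, hmem0 1 one_pos.le⟩
    hGc.continuousOn
  -- global existence
  have hex : ∃ z ∈ S, ∀ w ∈ S, g z.1 z.2 ≤ g w.1 w.2 := by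
    by_cases hsp : (Metric.sphere (0 : (Fin n → ℝ) × (Fin n → ℝ)) 1).Nonempty
    · obtain ⟨w0, hw0, hw0min⟩ := (isCompact_sphere (0 : (Fin n → ℝ) × (Fin n → ℝ)) 1
        ).exists_isMinOn hsp hQc.continuousOn
      have hw0ne : w0 ≠ 0 := by
        intro h
        rw [h, mem_sphere_zero_iff_norm] at hw0
        simp at hw0
      have hμ : 0 < Qaux C F ε γ w0.1 w0.2 := by
        refine qpos _ _ fun h => hw0ne (Prod.ext h.1 h.2)
      set μ := Qaux C F ε γ w0.1 w0.2 with hμdef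
      set R : ℝ := (g 0 0 - g z1.1 z1.2) / μ + 2 with hRdef
      have hm1le : g z1.1 z1.2 ≤ g 0 0 := hz1min (hmem0 1 one_pos.le)
      have hR1 : 1 ≤ R := by
        have : 0 ≤ (g 0 0 - g z1.1 z1.2) / μ := div_nonneg (by linarith) hμ.le
        rw [hRdef]; linarith
      have hRμ : R * μ = (g 0 0 - g z1.1 z1.2) + 2 * μ := by
        rw [hRdef]; field_simp
      obtain ⟨z2, hz2K, hz2min⟩ := (hcomp R).exists_isMinOn ⟨0, hmem0 R (by linarith)⟩
        hGc.continuousOn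
      refine ⟨z2, hz2K.1, fun w hwS => ?_⟩
      by_cases hwR : ‖w‖ ≤ R
      · exact hz2min ⟨hwS, by rwa [Metric.mem_closedBall, dist_zero_right]⟩
      · push_neg at hwR
        have ht1 : 1 < ‖w‖ := by linarith
        have ht0 : ‖w‖ ≠ 0 := by positivity
        set t : ℝ := ‖w‖ with htdef
        set v : (Fin n → ℝ) × (Fin n → ℝ) := t⁻¹ • w with hvdef
        have hvnorm : ‖v‖ = 1 := by
          rw [hvdef, norm_smul, norm_inv, norm_norm, ← htdef, inv_mul_cancel₀ ht0]
        have hvS : v ∈ S := by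
          refine ⟨fun i => ?_, fun i => ?_⟩
          · exact mul_nonneg (inv_nonneg.mpr (by linarith)) (hwS.1 i)
          · exact mul_nonneg (inv_nonneg.mpr (by linarith)) (hwS.2 i)
        have hv1 : t • v.1 + (1 - t) • (0 : Fin n → ℝ) = w.1 := by
          rw [smul_zero, add_zero, hvdef]
          show t • (t⁻¹ • w.1) = w.1
          rw [smul_smul, mul_inv_cancel₀ ht0, one_smul]
        have hv2 : t • v.2 + (1 - t) • (0 : Fin n → ℝ) = w.2 := by
          rw [smul_zero, add_zero, hvdef]
          show t • (t⁻¹ • w.2) = w.2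
          rw [smul_smul, mul_inv_cancel₀ ht0, one_smul]
        have hcombo := combo t (1 - t) (by ring) v.1 v.2 0 0
        rw [hv1, hv2, sub_zero, sub_zero] at hcombo
        -- bounds
        have hgv : g z1.1 z1.2 ≤ g v.1 v.2 := hz1min
          ⟨hvS, by rw [Metric.mem_closedBall, dist_zero_right, hvnorm]⟩
        have hQv : μ ≤ Qaux C F ε γ v.1 v.2 :=
          hw0min (by rwa [mem_sphere_zero_iff_norm])
        have hgz2 : g z2.1 z2.2 ≤ g z1.1 z1.2 := hz2min
          ⟨hz1K.1, by
            have := hz1K.2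
            rw [Metric.mem_closedBall] at this ⊢
            linarith⟩
        have hkey : 0 < g z1.1 z1.2 - g 0 0 + t * μ := by
          have h1 : R * μ < t * μ := by
            apply mul_lt_mul_of_pos_right hwR hμ
          nlinarith
        have hA1 : t * g z1.1 z1.2 ≤ t * g v.1 v.2 :=
          mul_le_mul_of_nonneg_left hgv (by linarith)
        have hA2 : t * (t - 1) * μ ≤ t * (t - 1) * Qaux C F ε γ v.1 v.2 :=
          mul_le_mul_of_nonneg_left hQv (by nlinarith)
        nlinarith [mul_pos (show (0:ℝ) < t - 1 by linarith) hkey]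
    · -- no unit vectors: the whole space is inside the unit ball
      have hball : ∀ w : (Fin n → ℝ) × (Fin n → ℝ), ‖w‖ ≤ 1 := by
        intro w
        by_contra hw
        push_neg at hw
        have ht0 : ‖w‖ ≠ 0 := by positivity
        refine hsp ⟨‖w‖⁻¹ • w, ?_⟩
        rw [mem_sphere_zero_iff_norm, norm_smul, norm_inv, norm_norm,
          inv_mul_cancel₀ ht0]
      exact ⟨z1, hz1K.1, fun w hwS => hz1min
        ⟨hwS, by rw [Metric.mem_closedBall, dist_zero_right]; exact hball w⟩⟩
  -- package up
  obtain ⟨z, hzS, hzmin⟩ := hex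
  refine ⟨z, ⟨hzS.1, hzS.2, fun lam phi h1 h2 => hzmin (lam, phi) ⟨h1, h2⟩⟩, ?_⟩
  intro y hy
  have hyS : y ∈ S := ⟨hy.1, hy.2.1⟩
  have hymin : IsMinOn (fun z : (Fin n → ℝ) × (Fin n → ℝ) => g z.1 z.2) S y :=
    isMinOn_iff.mpr fun w hw => hy.2.2 w.1 w.2 hw.1 hw.2
  have hzmin' : IsMinOn (fun z : (Fin n → ℝ) × (Fin n → ℝ) => g z.1 z.2) S z :=
    isMinOn_iff.mpr fun w hw => hzmin w hw
  exact hstrict.eq_of_isMinOn hymin hzmin' hyS hzS
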